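/- arXiv:1310.5360 — 2 statements merged into one kernel-verified Lean document; each statement's English description precedes it below -/
import Mathlib

section
/- In any cascade of the BTW sandpile process on a graph, no node may receive n grains from a single neighbor before the root of the cascade has toppled n times. -/
namespace BTW

/-- All data specifying one realization of a BTW sandpile cascade on a finite graph:
the graph `G`, which nodes are sinks, the per-grain dissipation realization `diss`
(`diss u v k = true` means the `k`-th grain sent from `u` to `v` dissipates in transit),
the initial sand configuration `init`, and the `root` on which one extra grain is dropped. -/
structure Cascade (V : Type*) where
  G : SimpleGraph V
  adjDec : DecidableRel G.Adj
  sink : V → Bool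
  diss : V → V → ℕ → Bool
  init : V → ℕ
  root : V

attribute [instance] Cascade.adjDec

/-- Running tallies of a cascade: current grains held, cumulative topplings
(= grains sent along each incident edge), and cumulative grains received per ordered edge. -/
structure Config (V : Type*) where
  held : V → ℕ
  sentC : V → ℕ
  recvC : V → V → ℕ

variable {V : Type*} [Fintype V] [DecidableEq V]

/-- Number of grains, among those with indices in `[a, b)` sent from `u` to `v`,
that are not dissipated. -/
def arrivals (diss : V → V → ℕ → Bool) (u v : V) (a b : ℕ) : ℕ :=
  ((Finset.Ico a b).filter fun k => diss u v k = false).card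

/-- A node holding at least `deg` grains immediately topples as many times as possible
(capacity is `deg − 1`); sinks never topple. -/
def Cascade.tops (c : Cascade V) (cf : Config V) (v : V) : ℕ :=
  if c.sink v then 0 else cf.held v / c.G.degree v

/-- One synchronous step of the cascade: every over-capacity node topples,
sending one grain toward each neighbor per toppling; each grain dissipates or arrives
according to `c.diss`. -/
def Cascade.step (c : Cascade V) (cf : Config V) : Config V where
  held v := (cf.held v - c.G.degree v * c.tops cf v) +
    ∑ u ∈ c.G.neighborFinset v, arrivals c.diss u v (cf.sentC u) (cf.sentC u + c.tops cf u)
  sentC v := cf.sentC v + c.tops cf v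
  recvC u v := cf.recvC u v +
    if c.G.Adj u v then arrivals c.diss u v (cf.sentC u) (cf.sentC u + c.tops cf u) else 0

/-- The state of the cascade at (discrete) time `t`; at time `0` one grain is dropped on the root. -/
def Cascade.state (c : Cascade V) : ℕ → Config V
  | 0 => ⟨fun v => c.init v + if v = c.root then 1 else 0, fun _ => 0, fun _ _ => 0⟩
  | t + 1 => c.step (c.state t)

/-- Number of times `v` has toppled by time `t`. -/
def Cascade.topplesBy (c : Cascade V) (t : ℕ) (v : V) : ℕ := (c.state t).sentC v

/-- Number of grains `v` has received from `u` by time `t`. -/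
def Cascade.recvBy (c : Cascade V) (t : ℕ) (u v : V) : ℕ := (c.state t).recvC u v

/-- Number of grains sent from `u` toward `v` by time `t`. -/
def Cascade.sentBy (c : Cascade V) (t : ℕ) (u v : V) : ℕ :=
  if c.G.Adj u v then c.topplesBy t u else 0

/-- `v` initially holds exactly its capacity `deg v − 1` of grains. -/
def Cascade.AtCap (c : Cascade V) (v : V) : Prop := c.init v + 1 = c.G.degree v

/-- `v` topples at least once during the cascade. -/
def Cascade.Topples (c : Cascade V) (v : V) : Prop := ∃ t, 0 < c.topplesBy t v

/-- The area of the cascade: the number of distinct nodes that topple. -/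
noncomputable def Cascade.area (c : Cascade V) : ℕ := Set.ncard {v | c.Topples v}

/-- `v` is a node of the graph `G†`: the root, a toppling node, or a neighbor of a toppling
node (equivalently, a node toward which sand is sent, or the root). -/
def Cascade.InDagger (c : Cascade V) (v : V) : Prop :=
  v = c.root ∨ ∃ u, c.G.Adj u v ∧ c.Topples u

/-- The graph `G†`: edges of `G` along which sand is sent, i.e. edges with at least one
toppling endpoint (other nodes are isolated in this graph). -/
def Cascade.daggerGraph (c : Cascade V) : SimpleGraph V where
  Adj a b := c.G.Adj a b ∧ (c.Topples a ∨ c.Topples b)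
  symm := ⟨fun a b h => ⟨h.1.symm, h.2.symm⟩⟩
  loopless := ⟨fun a h => c.G.loopless.irrefl a h.1⟩

/-- The cascade forms a finite tree `G†`: the graph `G†` is acyclic and all its nodes are
connected to the root within it. -/
def Cascade.FormsTree (c : Cascade V) : Prop :=
  c.daggerGraph.IsAcyclic ∧ ∀ v, c.InDagger v → c.daggerGraph.Reachable c.root v

/-- `u` is the parent of `v`: `u` is the neighbor of `v` whose toppling first sent a grain
toward `v` (at some time `u` has sent sand toward `v` while no other node has). -/
def Cascade.IsParent (c : Cascade V) (u v : V) : Prop :=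
  ∃ t, 0 < c.sentBy t u v ∧ ∀ w, w ≠ u → c.sentBy t w v = 0

/-- `d` is a descendant of `v`: iterating the parent map starting from `d` reaches `v`. -/
def Cascade.IsDescendant (c : Cascade V) (d v : V) : Prop :=
  Relation.TransGen (fun a b => c.IsParent b a) d v

end BTW

/-!
A node `v` other than the root receives nothing but the grains its neighbours send it, one per
toppling, and it starts below its threshold `deg v`. By sand conservation, after `k` topplings it
must have received at least `k * deg v - init v > (k - 1) * deg v` grains. If every node has
toppled at most as often as the root by time `t`, then `v` has received at most
`deg v * (topplings of the root by time t)` grains, so by time `t + 1` it has toppled at most as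
often as the root had by time `t`. By induction no node ever topples more often than the root,
and the grains sent from `u` to `v` are bounded by the topplings of `u`.
-/

namespace BTW

variable {V : Type*}

lemma arrivals_le (diss : V → V → ℕ → Bool) (u v : V) (a k : ℕ) :
    arrivals diss u v a (a + k) ≤ k :=
  (Finset.card_filter_le _ _).trans (by simp)

namespace Cascade

variable [Fintype V] (c : Cascade V)

lemma degree_mul_tops_le (cf : Config V) (v : V) : c.G.degree v * c.tops cf v ≤ cf.held v := by
  unfold tops
  split
  · simp
  · rw [mul_comm]
    exact Nat.div_mul_le_self _ _

variable [DecidableEq V]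

lemma state_succ_recvC_of_adj (t : ℕ) {u v : V} (huv : c.G.Adj u v) :
    (c.state (t + 1)).recvC u v = (c.state t).recvC u v +
      arrivals c.diss u v ((c.state t).sentC u) ((c.state t).sentC u + c.tops (c.state t) u) := by
  simp [state, step, huv]

/-- Conservation of sand at a node. -/
lemma held_add_degree_mul_sentC (t : ℕ) (v : V) :
    (c.state t).held v + c.G.degree v * (c.state t).sentC v =
      c.init v + (if v = c.root then 1 else 0) +
        ∑ u ∈ c.G.neighborFinset v, (c.state t).recvC u v := by
  induction t with
  | zero => simp [state]
  | succ t ih =>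
    have hrecv : ∀ u ∈ c.G.neighborFinset v, (c.state (t + 1)).recvC u v =
        (c.state t).recvC u v + arrivals c.diss u v ((c.state t).sentC u)
          ((c.state t).sentC u + c.tops (c.state t) u) := fun u hu =>
      c.state_succ_recvC_of_adj t ((c.G.mem_neighborFinset v u).mp hu).symm
    have hheld := c.degree_mul_tops_le (c.state t) v
    change (c.state t).held v - c.G.degree v * c.tops (c.state t) v + _ +
      c.G.degree v * ((c.state t).sentC v + c.tops (c.state t) v) = _
    rw [Finset.sum_congr rfl hrecv, Finset.sum_add_distrib, Nat.mul_add]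
    omega

lemma recvBy_le_topplesBy (t : ℕ) (u v : V) : c.recvBy t u v ≤ c.topplesBy t u := by
  induction t with
  | zero => simp [recvBy, topplesBy, state]
  | succ t ih =>
    change (c.state t).recvC u v ≤ (c.state t).sentC u at ih
    change (c.state t).recvC u v + _ ≤ (c.state t).sentC u + c.tops (c.state t) u
    have := arrivals_le c.diss u v ((c.state t).sentC u) (c.tops (c.state t) u)
    split <;> omega

lemma topplesBy_le_succ (t : ℕ) (v : V) : c.topplesBy t v ≤ c.topplesBy (t + 1) v :=
  Nat.le_add_right _ _

lemma degree_mul_topplesBy_succ_le {v : V} (hv : v ≠ c.root) (t : ℕ) :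
    c.G.degree v * c.topplesBy (t + 1) v ≤
      c.init v + ∑ u ∈ c.G.neighborFinset v, c.recvBy t u v := by
  have hheld := c.degree_mul_tops_le (c.state t) v
  have hcons := c.held_add_degree_mul_sentC t v
  rw [if_neg hv] at hcons
  change c.G.degree v * ((c.state t).sentC v + c.tops (c.state t) v) ≤ _
  unfold recvBy
  rw [Nat.mul_add]
  omega

lemma topplesBy_succ_le_topplesBy_root {v : V} (hv : v ≠ c.root)
    (hinit : c.init v < c.G.degree v) (t : ℕ)
    (hle : ∀ u, c.topplesBy t u ≤ c.topplesBy t c.root) :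
    c.topplesBy (t + 1) v ≤ c.topplesBy t c.root := by
  have hrecv : ∑ u ∈ c.G.neighborFinset v, c.recvBy t u v ≤
      c.G.degree v * c.topplesBy t c.root :=
    calc ∑ u ∈ c.G.neighborFinset v, c.recvBy t u v
        ≤ ∑ _u ∈ c.G.neighborFinset v, c.topplesBy t c.root :=
          Finset.sum_le_sum fun u _ => (c.recvBy_le_topplesBy t u v).trans (hle u)
      _ = c.G.degree v * c.topplesBy t c.root := by simp
  have : c.G.degree v * c.topplesBy (t + 1) v < c.G.degree v * (c.topplesBy t c.root + 1) := by
    have := c.degree_mul_topplesBy_succ_le hv t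
    rw [Nat.mul_add, Nat.mul_one]
    omega
  exact Nat.lt_succ_iff.mp (Nat.lt_of_mul_lt_mul_left this)

lemma topplesBy_le_topplesBy_root (hinit : ∀ w, c.init w < c.G.degree w) (t : ℕ) (v : V) :
    c.topplesBy t v ≤ c.topplesBy t c.root := by
  induction t generalizing v with
  | zero => simp [topplesBy, state]
  | succ t ih =>
    obtain rfl | hv := eq_or_ne v c.root
    · exact le_rfl
    · exact (c.topplesBy_succ_le_topplesBy_root hv (hinit v) t ih).trans
        (c.topplesBy_le_succ t c.root)

end Cascade

end BTW

theorem stmt1_general {V : Type*} [Fintype V] [DecidableEq V] (c : BTW.Cascade V)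
    (hinit : ∀ w, c.init w < c.G.degree w)
    (u v : V) (n : ℕ) (t : ℕ)
    (h : n ≤ c.recvBy t u v) :
    n ≤ c.topplesBy t c.root :=
  h.trans ((c.recvBy_le_topplesBy t u v).trans (c.topplesBy_le_topplesBy_root hinit t u))

/-- In any cascade, no node may receive `n` grains from a single neighbor
before the root has toppled `n` times. -/
theorem stmt1 {V : Type*} [Fintype V] [DecidableEq V] (c : BTW.Cascade V)
    (hsink : ∀ w, c.sink w = false)
    (hinit : ∀ w, c.init w < c.G.degree w)
    (u v : V) (n : ℕ) (t : ℕ)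
    (h : n ≤ c.recvBy t u v) :
    n ≤ c.topplesBy t c.root :=
  stmt1_general c hinit u v n t h
end

section
/- Let ε ∈ [0,1), φ ∈ [0,1], and consider formal power series A_n(x), B_n(x) (n ≥ 1) in x satisfying the specialized (w = 1) system: B_n = (1−ε)^{2n} φ x (A_n + B_n)², A_1 = ε + (ε/(1−ε)) B_1 + (1−ε)(1−φ), and A_n = ε B_{n−1} + (ε/(1−ε)) B_n + (1−ε)^{2n−1} φ x [(A_{n−1} + B_{n−1})² − (B_{n−1})²] for n > 1. If the ansatz B_n = A_{n+1} + B_{n+1} holds for all n ≥ 1, then F := A_1 + B_1 satisfies the single-type percolation equation F = [1 − (1−ε)φ] + (1−ε) φ x F². -/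
/-! Only the first level of the hierarchy enters: the `ε/(1-ε)` term of `A 1` combines with
`B 1` into `B 1 / (1 - ε)`, which is `(1 - ε) φ x F²` by the equation for `B 1`. -/

lemma add_eq_percolation_of_level_one {ε φ x a b : ℝ} (hε : ε ≠ 1)
    (hb : b = (1 - ε) ^ 2 * φ * x * (a + b) ^ 2)
    (ha : a = ε + (ε / (1 - ε)) * b + (1 - ε) * (1 - φ)) :
    a + b = (1 - (1 - ε) * φ) + (1 - ε) * φ * x * (a + b) ^ 2 := by
  have hε' : 1 - ε ≠ 0 := sub_ne_zero.mpr hε.symm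
  have hsum : a + b = ε + (1 - ε) * (1 - φ) + b / (1 - ε) := by
    rw [ha]; field_simp; ring
  have hquot : b / (1 - ε) = (1 - ε) * φ * x * (a + b) ^ 2 := by
    rw [div_eq_iff hε']; linear_combination hb
  linear_combination hsum + hquot

theorem stmt16_general (ε φ : ℝ) (hε1 : ε < 1)
    (A B : ℕ → ℝ → ℝ)
    (hB : ∀ n : ℕ, 1 ≤ n → ∀ x : ℝ,
      B n x = (1 - ε) ^ (2 * n) * φ * x * (A n x + B n x) ^ 2)
    (hA1 : ∀ x : ℝ, A 1 x = ε + (ε / (1 - ε)) * B 1 x + (1 - ε) * (1 - φ)) :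
    ∀ x : ℝ, A 1 x + B 1 x =
      (1 - (1 - ε) * φ) + (1 - ε) * φ * x * (A 1 x + B 1 x) ^ 2 :=
  fun x => add_eq_percolation_of_level_one hε1.ne (hB 1 le_rfl x) (hA1 x)

/-- For the specialized (`w = 1`) system of the multitype branching process for
the BTW sandpile on a random 3-regular graph, with dissipation `ε ∈ [0, 1)` and
at-capacity correlation `φ ∈ [0, 1]`: if the functions `A n`, `B n` (for `n ≥ 1`) satisfy
`B n = (1 − ε)^{2n} φ x (A n + B n)²`,
`A 1 = ε + (ε/(1 − ε)) B 1 + (1 − ε)(1 − φ)`,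
`A n = ε B (n−1) + (ε/(1 − ε)) B n + (1 − ε)^{2n−1} φ x [(A (n−1) + B (n−1))² − (B (n−1))²]`
for `n > 1`, and the ansatz `B n = A (n+1) + B (n+1)` holds for all `n ≥ 1`, then
`F := A 1 + B 1` satisfies `F = [1 − (1 − ε)φ] + (1 − ε) φ x F²`. -/
theorem stmt16 (ε φ : ℝ) (hε0 : 0 ≤ ε) (hε1 : ε < 1) (hφ : φ ∈ Set.Icc (0 : ℝ) 1)
    (A B : ℕ → ℝ → ℝ)
    (hB : ∀ n : ℕ, 1 ≤ n → ∀ x : ℝ,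
      B n x = (1 - ε) ^ (2 * n) * φ * x * (A n x + B n x) ^ 2)
    (hA1 : ∀ x : ℝ, A 1 x = ε + (ε / (1 - ε)) * B 1 x + (1 - ε) * (1 - φ))
    (hAn : ∀ n : ℕ, ∀ x : ℝ,
      A (n + 2) x = ε * B (n + 1) x + (ε / (1 - ε)) * B (n + 2) x +
        (1 - ε) ^ (2 * n + 3) * φ * x *
          ((A (n + 1) x + B (n + 1) x) ^ 2 - (B (n + 1) x) ^ 2))
    (hansatz : ∀ n : ℕ, 1 ≤ n → ∀ x : ℝ, B n x = A (n + 1) x + B (n + 1) x) :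
    ∀ x : ℝ, A 1 x + B 1 x =
      (1 - (1 - ε) * φ) + (1 - ε) * φ * x * (A 1 x + B 1 x) ^ 2 :=
  stmt16_general ε φ hε1 A B hB hA1
end
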